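/- For every k ≥ 2, the stay-or-roll protocol is self-stabilizing on all 2 × k games: for every game with strategy spaces {1,2} × {1,...,k} that has at least one pure Nash equilibrium, from every state some pure Nash equilibrium is reachable with positive probability under synchronous stay-or-roll dynamics, and pure Nash equilibria are absorbing. -/

import Mathlib

open scoped Classical

/-- Player 1 is best-responding at `a` in a `2 × k` game. -/
def BR1 (k : ℕ) (u1 : Fin 2 × Fin k → ℝ) (a : Fin 2 × Fin k) : Prop :=
  ∀ α : Fin 2, u1 (α, a.2) ≤ u1 a

/-- Player 2 is best-responding at `a` in a `2 × k` game. -/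
def BR2 (k : ℕ) (u2 : Fin 2 × Fin k → ℝ) (a : Fin 2 × Fin k) : Prop :=
  ∀ β : Fin k, u2 (a.1, β) ≤ u2 a

/-- A pure Nash equilibrium: both players are best-responding. -/
def PNE (k : ℕ) (u1 u2 : Fin 2 × Fin k → ℝ) (a : Fin 2 × Fin k) : Prop :=
  BR1 k u1 a ∧ BR2 k u2 a

/-- Transition probability of synchronous stay-or-roll dynamics: each player keeps
its action if best-responding, else chooses uniformly at random. -/
noncomputable def ker (k : ℕ) (u1 u2 : Fin 2 × Fin k → ℝ)
    (a b : Fin 2 × Fin k) : ℝ :=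
  (if BR1 k u1 a then (if b.1 = a.1 then (1 : ℝ) else 0) else 1 / 2) *
  (if BR2 k u2 a then (if b.2 = a.2 then (1 : ℝ) else 0) else 1 / k)

/-- Distribution of the state at time `t` starting from `a0`. -/
noncomputable def evolve (k : ℕ) (u1 u2 : Fin 2 × Fin k → ℝ)
    (a0 : Fin 2 × Fin k) : ℕ → Fin 2 × Fin k → ℝ
  | 0 => fun b => if b = a0 then 1 else 0
  | t + 1 => fun b => ∑ a : Fin 2 × Fin k, evolve k u1 u2 a0 t a * ker k u1 u2 a b

/-
Fix a pure Nash equilibrium `p`. Because player 1 has only two actions, a state where player 1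
is not best-responding becomes one where it is after player 1 switches rows; and any state in
row `p.1` where player 2 is not best-responding moves to `p` in one step. From a state where
player 1 is best-responding in a row other than `p.1`, player 2 first rolls onto a best
response; if player 1 is then unhappy, it rolls into row `p.1`, and at most one more step
reaches `p`.
-/

section StayOrRoll

variable {k : ℕ} {u1 u2 : Fin 2 × Fin k → ℝ}

lemma ker_nonneg (a b : Fin 2 × Fin k) : 0 ≤ ker k u1 u2 a b := by
  unfold ker
  split_ifs <;> positivity

lemma ker_pos {a b : Fin 2 × Fin k} (h1 : BR1 k u1 a → b.1 = a.1)
    (h2 : BR2 k u2 a → b.2 = a.2) : 0 < ker k u1 u2 a b := by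
  have hk : (0 : ℝ) < k := by exact_mod_cast a.2.pos
  unfold ker
  split_ifs <;> simp_all

lemma ker_self_of_PNE {p : Fin 2 × Fin k} (hp : PNE k u1 u2 p) : ker k u1 u2 p p = 1 := by
  simp [ker, hp.1, hp.2]

lemma evolve_nonneg (a0 : Fin 2 × Fin k) : ∀ m b, 0 ≤ evolve k u1 u2 a0 m b
  | 0, b => by simp only [evolve]; split_ifs <;> norm_num
  | m + 1, b => Finset.sum_nonneg fun a _ => mul_nonneg (evolve_nonneg a0 m a) (ker_nonneg a b)

lemma evolve_succ_pos {a0 b c : Fin 2 × Fin k} {m : ℕ} (hb : 0 < evolve k u1 u2 a0 m b)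
    (hbc : 0 < ker k u1 u2 b c) : 0 < evolve k u1 u2 a0 (m + 1) c :=
  Finset.sum_pos' (fun a _ => mul_nonneg (evolve_nonneg a0 m a) (ker_nonneg a c))
    ⟨b, Finset.mem_univ b, mul_pos hb hbc⟩

variable (k u1 u2) in
def Reaches : Fin 2 × Fin k → Fin 2 × Fin k → Prop :=
  Relation.ReflTransGen fun a b => 0 < ker k u1 u2 a b

lemma Reaches.exists_evolve_pos {a b : Fin 2 × Fin k} (h : Reaches k u1 u2 a b) :
    ∃ m, 0 < evolve k u1 u2 a m b := by
  induction h with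
  | refl => exact ⟨0, by simp [evolve]⟩
  | tail _ hstep ih =>
    obtain ⟨m, hm⟩ := ih
    exact ⟨m + 1, evolve_succ_pos hm hstep⟩

lemma BR1_of_not_BR1 {x x' : Fin 2} {y : Fin k} (hx : x' ≠ x) (h : ¬ BR1 k u1 (x, y)) :
    BR1 k u1 (x', y) := by
  have two_rows : ∀ z : Fin 2, z = x ∨ z = x' := by omega
  obtain ⟨α, hα⟩ : ∃ α, u1 (x, y) < u1 (α, y) := by
    simpa only [BR1, not_forall, not_le] using h
  have hα' : α = x' := (two_rows α).resolve_left (by rintro rfl; exact hα.false)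
  intro γ
  rcases two_rows γ with rfl | rfl
  · exact hα'.symm ▸ hα.le
  · exact le_rfl

lemma exists_BR2_in_row (x : Fin 2) (y : Fin k) : ∃ β, BR2 k u2 (x, β) :=
  have : Nonempty (Fin k) := ⟨y⟩
  Finite.exists_max fun β => u2 (x, β)

variable {p : Fin 2 × Fin k}

lemma exists_PNE_reaches_of_BR1_of_fst_eq (hp : PNE k u1 u2 p) {a : Fin 2 × Fin k}
    (h1 : BR1 k u1 a) (ha : a.1 = p.1) : ∃ q, PNE k u1 u2 q ∧ Reaches k u1 u2 a q := by
  by_cases h2 : BR2 k u2 a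
  · exact ⟨a, ⟨h1, h2⟩, .refl⟩
  · exact ⟨p, hp, .single (ker_pos (fun _ => ha.symm) (absurd · h2))⟩

lemma exists_PNE_reaches_of_BR1 (hp : PNE k u1 u2 p) {a : Fin 2 × Fin k}
    (h1 : BR1 k u1 a) : ∃ q, PNE k u1 u2 q ∧ Reaches k u1 u2 a q := by
  by_cases ha : a.1 = p.1
  · exact exists_PNE_reaches_of_BR1_of_fst_eq hp h1 ha
  by_cases h2 : BR2 k u2 a
  · exact ⟨a, ⟨h1, h2⟩, .refl⟩
  obtain ⟨β, hβ⟩ := exists_BR2_in_row (u2 := u2) a.1 a.2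
  have step₁ : 0 < ker k u1 u2 a (a.1, β) := ker_pos (fun _ => rfl) (absurd · h2)
  by_cases h1' : BR1 k u1 (a.1, β)
  · exact ⟨(a.1, β), ⟨h1', hβ⟩, .single step₁⟩
  have step₂ : 0 < ker k u1 u2 (a.1, β) (p.1, β) := ker_pos (absurd · h1') (fun _ => rfl)
  obtain ⟨q, hq, hreach⟩ :=
    exists_PNE_reaches_of_BR1_of_fst_eq hp (BR1_of_not_BR1 (Ne.symm ha) h1') rfl
  exact ⟨q, hq, .head step₁ (.head step₂ hreach)⟩

lemma exists_PNE_reaches (hp : PNE k u1 u2 p) (a : Fin 2 × Fin k) :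
    ∃ q, PNE k u1 u2 q ∧ Reaches k u1 u2 a q := by
  by_cases h1 : BR1 k u1 a
  · exact exists_PNE_reaches_of_BR1 hp h1
  obtain ⟨x', hx'⟩ : ∃ x' : Fin 2, x' ≠ a.1 := ⟨a.1 + 1, by omega⟩
  have step : 0 < ker k u1 u2 a (x', a.2) := ker_pos (absurd · h1) (fun _ => rfl)
  obtain ⟨q, hq, hreach⟩ := exists_PNE_reaches_of_BR1 hp (BR1_of_not_BR1 hx' h1)
  exact ⟨q, hq, .head step hreach⟩

end StayOrRoll

theorem stmt16_general (k : ℕ) (u1 u2 : Fin 2 × Fin k → ℝ)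
    (hpne : ∃ p, PNE k u1 u2 p) :
    (∀ p, PNE k u1 u2 p → ker k u1 u2 p p = 1) ∧
    (∀ a : Fin 2 × Fin k, ∃ (p : Fin 2 × Fin k) (m : ℕ),
      PNE k u1 u2 p ∧ 0 < evolve k u1 u2 a m p) := by
  obtain ⟨p, hp⟩ := hpne
  refine ⟨fun q hq => ker_self_of_PNE hq, fun a => ?_⟩
  obtain ⟨q, hq, hreach⟩ := exists_PNE_reaches hp a
  obtain ⟨m, hm⟩ := hreach.exists_evolve_pos
  exact ⟨q, m, hq, hm⟩

/-- For every `k ≥ 2`, the stay-or-roll protocol is self-stabilizing on all `2 × k`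
games: for every such game with at least one pure Nash equilibrium, pure Nash
equilibria are absorbing, and from every state some pure Nash equilibrium is
reachable with positive probability under synchronous stay-or-roll dynamics. -/
theorem stmt16 (k : ℕ) (hk : 2 ≤ k) (u1 u2 : Fin 2 × Fin k → ℝ)
    (hpne : ∃ p, PNE k u1 u2 p) :
    (∀ p, PNE k u1 u2 p → ker k u1 u2 p p = 1) ∧
    (∀ a : Fin 2 × Fin k, ∃ (p : Fin 2 × Fin k) (m : ℕ),
      PNE k u1 u2 p ∧ 0 < evolve k u1 u2 a m p) :=
  stmt16_general k u1 u2 hpne
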